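/- Fix a real number a > −1/2 and define v : ℝ → ℝ by v(x) = 2·log( exp(x/2) + exp(−x/(2(1+2a))) ). Then v is differentiable, its derivative v′ is strictly monotone increasing on ℝ, v′(x) → 1 as x → +∞, and v′(x) → −1/(1+2a) as x → −∞; in particular v′ maps ℝ bijectively onto the open interval (−1/(1+2a), 1). -/

import Mathlib

open Real MeasureTheory Filter Set

theorem moment_map_image (a : ℝ) (ha : -1/2 < a) :
    Differentiable ℝ (fun x : ℝ =>
        2 * Real.log (Real.exp (x/2) + Real.exp (-x/(2*(1+2*a))))) ∧
    StrictMono (deriv (fun x : ℝ =>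
        2 * Real.log (Real.exp (x/2) + Real.exp (-x/(2*(1+2*a)))))) ∧
    Tendsto (deriv (fun x : ℝ =>
        2 * Real.log (Real.exp (x/2) + Real.exp (-x/(2*(1+2*a))))))
      atTop (nhds 1) ∧
    Tendsto (deriv (fun x : ℝ =>
        2 * Real.log (Real.exp (x/2) + Real.exp (-x/(2*(1+2*a))))))
      atBot (nhds (-1/(1+2*a))) ∧
    Set.BijOn (deriv (fun x : ℝ =>
        2 * Real.log (Real.exp (x/2) + Real.exp (-x/(2*(1+2*a))))))
      Set.univ (Set.Ioo (-1/(1+2*a)) (1 : ℝ)) := by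
  have h1 : (0:ℝ) < 1 + 2*a := by linarith
  have h1' : (1:ℝ) + 2*a ≠ 0 := ne_of_gt h1
  set b : ℝ := 1/(2*(1+2*a)) with hb
  have hbpos : 0 < b := by rw [hb]; positivity
  set c : ℝ := 1/2 + b with hc
  have hcpos : 0 < c := by rw [hc]; positivity
  set f := fun x : ℝ => 2 * Real.log (Real.exp (x/2) + Real.exp (-x/(2*(1+2*a)))) with hf
  set g := fun x : ℝ => 1 - 2*c/(Real.exp (c*x)+1) with hg
  have hEpos : ∀ x : ℝ, 0 < Real.exp (c*x) + 1 := fun x => by positivity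
  have hid : -1/(1+2*a) = 1 - 2*c := by
    rw [hc, hb]; field_simp; ring
  have hderiv : ∀ x, HasDerivAt f (g x) x := by
    intro x
    have h2 : HasDerivAt (fun x : ℝ => x/2) (1/2) x := by
      simpa using (hasDerivAt_id x).div_const 2
    have h3 : HasDerivAt (fun x : ℝ => -x/(2*(1+2*a))) (-1/(2*(1+2*a))) x := by
      simpa using ((hasDerivAt_id x).neg).div_const (2*(1+2*a))
    have h4 : HasDerivAt (fun x : ℝ => Real.exp (x/2)) (Real.exp (x/2) * (1/2)) x :=
      (Real.hasDerivAt_exp _).comp x h2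
    have h5 : HasDerivAt (fun x : ℝ => Real.exp (-x/(2*(1+2*a))))
        (Real.exp (-x/(2*(1+2*a))) * (-1/(2*(1+2*a)))) x :=
      (Real.hasDerivAt_exp _).comp x h3
    have hsum := h4.add h5
    have hpos : 0 < Real.exp (x/2) + Real.exp (-x/(2*(1+2*a))) := by positivity
    have hlog := (hsum.log (ne_of_gt hpos)).const_mul 2
    convert hlog using 1
    case e'_4 => rfl
    case e'_5 => rfl
    case e'_8 => rfl
    rw [Pi.add_apply]
    have hE : Real.exp (c*x) = Real.exp (x/2) / Real.exp (-x/(2*(1+2*a))) := by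
      rw [← Real.exp_sub]
      congr 1
      rw [hc, hb]; field_simp; ring
    set u := Real.exp (x/2) with hu
    set w := Real.exp (-x/(2*(1+2*a))) with hw
    have hupos : 0 < u := Real.exp_pos _
    have hwpos : 0 < w := Real.exp_pos _
    rw [hg]
    simp only
    rw [hE, hc, hb]
    have huw : u + w ≠ 0 := ne_of_gt (by positivity)
    field_simp
    ring
  have hdiff : Differentiable ℝ f := fun x => (hderiv x).differentiableAt
  have hde : deriv f = g := funext fun x => (hderiv x).deriv
  have hmono : StrictMono g := by
    intro x y hxy
    have hE : Real.exp (c*x) < Real.exp (c*y) :=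
      Real.exp_lt_exp.mpr (by nlinarith)
    have : 2*c/(Real.exp (c*y)+1) < 2*c/(Real.exp (c*x)+1) := by
      apply div_lt_div_of_pos_left (by positivity) (hEpos x) (by linarith)
    simp only [hg]
    linarith
  have htop : Tendsto g atTop (nhds 1) := by
    have hE : Tendsto (fun x : ℝ => Real.exp (c*x) + 1) atTop atTop := by
      apply tendsto_atTop_add_const_right
      exact Real.tendsto_exp_atTop.comp (tendsto_id.const_mul_atTop hcpos)
    have : Tendsto (fun x : ℝ => 2*c/(Real.exp (c*x)+1)) atTop (nhds 0) :=
      Tendsto.div_atTop tendsto_const_nhds hE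
    have := (tendsto_const_nhds (x := (1:ℝ)) (f := atTop)).sub this
    simpa using this
  have hbot : Tendsto g atBot (nhds (1 - 2*c)) := by
    have hE : Tendsto (fun x : ℝ => Real.exp (c*x) + 1) atBot (nhds 1) := by
      have : Tendsto (fun x : ℝ => Real.exp (c*x)) atBot (nhds 0) :=
        Real.tendsto_exp_atBot.comp (tendsto_id.const_mul_atBot hcpos)
      simpa using this.add tendsto_const_nhds
    have hdiv : Tendsto (fun x : ℝ => 2*c/(Real.exp (c*x)+1)) atBot (nhds (2*c)) := by
      have := (tendsto_const_nhds (x := 2*c) (f := (atBot : Filter ℝ))).div hE one_ne_zero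
      rw [div_one] at this
      exact this
    have := (tendsto_const_nhds (x := (1:ℝ)) (f := (atBot : Filter ℝ))).sub hdiv
    simpa using this
  have hbij : Set.BijOn g Set.univ (Set.Ioo (1-2*c) 1) := by
    refine ⟨fun x _ => ?_, hmono.injective.injOn, fun y hy => ?_⟩
    · constructor
      · have : 2*c/(Real.exp (c*x)+1) < 2*c := by
          rw [div_lt_iff₀ (hEpos x)]
          nlinarith [Real.exp_pos (c*x)]
        simp only [hg]; linarith
      · have : 0 < 2*c/(Real.exp (c*x)+1) := by positivity
        simp only [hg]; linarith
    · obtain ⟨hy1, hy2⟩ := hy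
      have hyc : 0 < 1 - y := by linarith
      have ht : 0 < 2*c/(1-y) - 1 := by
        rw [sub_pos, lt_div_iff₀ hyc]; linarith
      refine ⟨(1/c) * Real.log (2*c/(1-y) - 1), Set.mem_univ _, ?_⟩
      simp only [hg]
      rw [show c * ((1/c) * Real.log (2*c/(1-y) - 1)) = Real.log (2*c/(1-y) - 1) by
        field_simp]
      rw [Real.exp_log ht]
      have : (2*c/(1-y) - 1) + 1 = 2*c/(1-y) := by ring
      rw [this]
      have h2c : 2*c/(2*c/(1-y)) = 1 - y := by
        rw [div_div_eq_mul_div]; field_simp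
      rw [h2c]; ring
  rw [hde, hid]
  exact ⟨hdiff, hmono, htop, hbot, hbij⟩
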